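/- arXiv:2505.09534 — 3 statements merged into one kernel-verified Lean document; each statement's English description precedes it below -/
import Mathlib

section
/- If a graph G contains an odd cycle, then its great shadow S(G) contains a subdivision of K_{3,3} as a subgraph. -/
universe u w

section Defs

variable {V : Type u} {W : Type w}

/-- The great shadow `S(G)` of a graph `G`: on vertex set `V × Bool`, the copies `(v, false)`
form `G` itself, and each shadow vertex `(v, true)` is adjacent to `(v, false)` and to
`(u, false)` for every neighbor `u` of `v` in `G`; no two shadow vertices are adjacent. -/
def greatShadow (G : SimpleGraph V) : SimpleGraph (V × Bool) where
  Adj x y := x ≠ y ∧ ¬(x.2 = true ∧ y.2 = true) ∧ (x.1 = y.1 ∨ G.Adj x.1 y.1)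
  symm := ⟨by
    rintro x y ⟨h1, h2, h3⟩
    exact ⟨h1.symm, fun h => h2 ⟨h.2, h.1⟩, h3.imp Eq.symm SimpleGraph.Adj.symm⟩⟩
  loopless := ⟨fun x h => h.1 rfl⟩

/-- The interior (internal vertices) of a walk: its support without its two endpoints. -/
def SimpleGraph.Walk.interior {G : SimpleGraph V} {u v : V} (p : G.Walk u v) : List V :=
  p.support.tail.dropLast

/-- `ContainsSubdivision K G` means that `G` contains a subdivision of `K` as a subgraph:
there is an injective placement of the branch vertices of `K` in `G` together with
internally disjoint paths in `G` realizing the edges of `K`. -/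
def ContainsSubdivision (K : SimpleGraph V) (G : SimpleGraph W) : Prop :=
  ∃ f : V → W, Function.Injective f ∧
    ∃ P : ∀ u v, K.Adj u v → G.Walk (f u) (f v),
      (∀ u v (h : K.Adj u v), (P u v h).IsPath) ∧
      (∀ u v (h : K.Adj u v), P v u h.symm = (P u v h).reverse) ∧
      (∀ u v (h : K.Adj u v), ∀ x ∈ (P u v h).interior, x ∉ Set.range f) ∧
      (∀ u v a b (h : K.Adj u v) (h' : K.Adj a b), s(u, v) ≠ s(a, b) →
        ∀ x ∈ (P u v h).interior, x ∉ (P a b h').interior)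

/-- `H.IsSubdivisionOf K` : `H` is (isomorphic to) a subdivision of `K`, i.e. `H` contains a
subdivision of `K` whose branch vertices and paths exhaust all vertices and edges of `H`. -/
def IsSubdivisionOf (H : SimpleGraph W) (K : SimpleGraph V) : Prop :=
  ∃ f : V → W, Function.Injective f ∧
    ∃ P : ∀ u v, K.Adj u v → H.Walk (f u) (f v),
      (∀ u v (h : K.Adj u v), (P u v h).IsPath) ∧
      (∀ u v (h : K.Adj u v), P v u h.symm = (P u v h).reverse) ∧
      (∀ u v (h : K.Adj u v), ∀ x ∈ (P u v h).interior, x ∉ Set.range f) ∧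
      (∀ u v a b (h : K.Adj u v) (h' : K.Adj a b), s(u, v) ≠ s(a, b) →
        ∀ x ∈ (P u v h).interior, x ∉ (P a b h').interior) ∧
      (∀ e ∈ H.edgeSet, ∃ u v, ∃ h : K.Adj u v, e ∈ (P u v h).edges) ∧
      (∀ x : W, x ∈ Set.range f ∨ ∃ u v, ∃ h : K.Adj u v, x ∈ (P u v h).support)

/-- The diamond graph `K₄⁻`: the complete graph on four vertices minus one edge. -/
def diamondGraph : SimpleGraph (Fin 4) :=
  (SimpleGraph.completeGraph (Fin 4)).deleteEdges {s((0 : Fin 4), (1 : Fin 4))}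

/-- The cycle graph `Cₙ` on `ZMod n` (for `n ≥ 3`). -/
def cycleG (n : ℕ) : SimpleGraph (ZMod n) :=
  SimpleGraph.fromRel (fun u v => u - v = 1)

/-- The square of the cycle graph `Cₙ`: vertices at cycle-distance at most 2 are adjacent. -/
def cycleSq (n : ℕ) : SimpleGraph (ZMod n) :=
  SimpleGraph.fromRel (fun u v => u - v = 1 ∨ u - v = 2)

/-- The theta graph `θ(ℓ, m, n)` on `ℓ + m + n` vertices, obtained by joining the endvertices
of paths `P_ℓ` and `P_n` to the endvertices of a path `P_m`. -/
def thetaGraph (l m n : ℕ) : SimpleGraph (Fin l ⊕ Fin m ⊕ Fin n) :=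
  SimpleGraph.fromRel (fun x y =>
    match x, y with
    | Sum.inl a, Sum.inl b => (a : ℕ) + 1 = (b : ℕ)
    | Sum.inr (Sum.inl a), Sum.inr (Sum.inl b) => (a : ℕ) + 1 = (b : ℕ)
    | Sum.inr (Sum.inr a), Sum.inr (Sum.inr b) => (a : ℕ) + 1 = (b : ℕ)
    | Sum.inr (Sum.inl a), Sum.inl b =>
        ((a : ℕ) = 0 ∧ (b : ℕ) = 0) ∨ ((a : ℕ) = m - 1 ∧ (b : ℕ) = l - 1)
    | Sum.inr (Sum.inl a), Sum.inr (Sum.inr b) =>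
        ((a : ℕ) = 0 ∧ (b : ℕ) = 0) ∨ ((a : ℕ) = m - 1 ∧ (b : ℕ) = n - 1)
    | _, _ => False)

/-- A plane embedding (drawing) of a graph `G`: an injective placement of the vertices in the
plane together with simple arcs for the edges, such that arcs pass through no vertices other
than their endpoints, and two arcs realizing distinct edges meet only in common endpoints. -/
structure PlaneEmbedding (G : SimpleGraph V) where
  vtx : V → ℝ × ℝ
  vtx_inj : Function.Injective vtx
  arc : ∀ ⦃u v : V⦄, G.Adj u v → Path (vtx u) (vtx v)
  arc_inj : ∀ ⦃u v : V⦄ (h : G.Adj u v), Function.Injective (arc h)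
  arc_symm : ∀ ⦃u v : V⦄ (h : G.Adj u v), arc h.symm = (arc h).symm
  arc_vtx : ∀ ⦃u v : V⦄ (h : G.Adj u v) (w : V), vtx w ∈ Set.range (arc h) → w = u ∨ w = v
  arc_meet : ∀ ⦃u v a b : V⦄ (h : G.Adj u v) (h' : G.Adj a b), s(u, v) ≠ s(a, b) →
    Set.range (arc h) ∩ Set.range (arc h') ⊆ ({vtx u, vtx v} : Set (ℝ × ℝ)) ∩ {vtx a, vtx b}

/-- A graph is planar if it admits a plane embedding. -/
def IsPlanar (G : SimpleGraph V) : Prop := Nonempty (PlaneEmbedding G)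

/-- The drawing of a plane embedding: the union of all vertex points and edge arcs. -/
def PlaneEmbedding.drawing {G : SimpleGraph V} (E : PlaneEmbedding G) : Set (ℝ × ℝ) :=
  Set.range E.vtx ∪ ⋃ (u) (v) (h : G.Adj u v), Set.range (E.arc h)

/-- The edge `uv` lies on the boundary of the outer (unbounded) face of the embedding `E`. -/
def PlaneEmbedding.OnOuterFace {G : SimpleGraph V} (E : PlaneEmbedding G)
    {u v : V} (h : G.Adj u v) : Prop :=
  ∃ p : ℝ × ℝ, p ∉ E.drawing ∧
    ¬Bornology.IsBounded (connectedComponentIn E.drawingᶜ p) ∧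
    Set.range (E.arc h) ⊆ closure (connectedComponentIn E.drawingᶜ p)

/-- No two distinct cycles of `G` share an edge: any two cycles having a common edge have the
same edge set. -/
def NoTwoCyclesShareEdge (G : SimpleGraph V) : Prop :=
  ∀ ⦃u v : V⦄ (c : G.Walk u u) (d : G.Walk v v), c.IsCycle → d.IsCycle →
    (∃ e, e ∈ c.edges ∧ e ∈ d.edges) → ∀ e, e ∈ c.edges ↔ e ∈ d.edges

/-- A cactus graph: a connected graph in which no two cycles share an edge. -/
def IsCactus (G : SimpleGraph V) : Prop := G.Connected ∧ NoTwoCyclesShareEdge G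

/-- `G` has no odd cycle (for connected graphs this is equivalent to being bipartite). -/
def HasNoOddCycle (G : SimpleGraph V) : Prop :=
  ∀ ⦃v : V⦄ (c : G.Walk v v), c.IsCycle → ¬Odd c.length

end Defs
section AuxTK33
namespace TK33
open SimpleGraph Walk List

variable {V : Type u}

lemma tail_dropLast' {α : Type*} (l : List α) : l.tail.dropLast = l.dropLast.tail := by
  cases l with
  | nil => rfl
  | cons a l =>
    cases l with
    | nil => rfl
    | cons b l => simp [List.dropLast_cons₂]

lemma dropLast_reverse' {α : Type*} (l : List α) : l.reverse.dropLast = l.tail.reverse := by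
  have h := List.tail_reverse (l := l.reverse)
  rw [List.reverse_reverse] at h
  rw [h, List.reverse_reverse]

lemma mem_interior_reverse {G : SimpleGraph V} {x y : V} (p : G.Walk x y) (z : V) :
    z ∈ p.reverse.interior ↔ z ∈ p.interior := by
  unfold SimpleGraph.Walk.interior
  rw [Walk.support_reverse, List.tail_reverse, dropLast_reverse', List.mem_reverse,
    tail_dropLast']

lemma interior_single {G : SimpleGraph V} {x y : V} (e : G.Adj x y) :
    (Walk.cons e Walk.nil).interior = [] := rfl

lemma interior_concat {G : SimpleGraph V} {x y z : V} (p : G.Walk x y) (e : G.Adj y z) :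
    (p.append (Walk.cons e Walk.nil)).interior = p.support.tail := by
  unfold SimpleGraph.Walk.interior
  rw [Walk.support_append, Walk.support_cons, Walk.support_nil, List.tail_cons]
  conv_lhs => rw [Walk.support_eq_cons p]
  rw [List.cons_append, List.tail_cons, List.dropLast_concat]

lemma gs_step {G : SimpleGraph V} {u : ℕ → V} (hadj : ∀ t, G.Adj (u t) (u (t+1)))
    (i : ℕ) (β : Bool) : (greatShadow G).Adj (u i, β) (u (i+1), !β) := by
  refine ⟨?_, ?_, Or.inr (hadj i)⟩
  · intro h
    have := congrArg Prod.snd h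
    cases β <;> simp_all
  · rintro ⟨h1, h2⟩
    cases β <;> simp_all

/-- The alternating walk `(u i, β), (u (i+1), !β), (u (i+2), β), …, (u (i+2m), β)`
in the great shadow. -/
def altWalk (G : SimpleGraph V) (u : ℕ → V) (hadj : ∀ t, G.Adj (u t) (u (t+1))) :
    ∀ (m i : ℕ) (β : Bool), (greatShadow G).Walk (u i, β) (u (i + 2*m), β)
  | 0, i, β => Walk.nil.copy rfl (by norm_num)
  | m+1, i, β =>
      (Walk.cons (gs_step hadj i β)
        (Walk.cons (gs_step hadj (i+1) (!β))
          ((altWalk G u hadj m (i+2) β).copy (by rw [Bool.not_not]) rfl))).copy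
        rfl (by rw [show i + 2 + 2*m = i + 2*(m+1) from by ring])

lemma altWalk_mem (G : SimpleGraph V) (u : ℕ → V) (hadj : ∀ t, G.Adj (u t) (u (t+1))) :
    ∀ (m i : ℕ) (β : Bool), ∀ x ∈ (altWalk G u hadj m i β).support,
      ∃ t, t ≤ 2*m ∧ x = (u (i+t), if t % 2 = 0 then β else !β) := by
  intro m
  induction m with
  | zero =>
    intro i β x hx
    simp only [altWalk, Walk.support_copy, Walk.support_nil, List.mem_singleton] at hx
    exact ⟨0, by omega, by simpa using hx⟩
  | succ m ih =>
    intro i β x hx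
    simp only [altWalk, Walk.support_copy, Walk.support_cons, List.mem_cons] at hx
    rcases hx with h0 | h1 | hrest
    · exact ⟨0, by omega, by simpa using h0⟩
    · exact ⟨1, by omega, by simpa using h1⟩
    · obtain ⟨t, ht, hx⟩ := ih (i+2) β x hrest
      refine ⟨t+2, by omega, ?_⟩
      have h2 : (t+2) % 2 = t % 2 := by omega
      rw [hx, h2, show i + 2 + t = i + (t+2) from by ring]

lemma altWalk_nodup (G : SimpleGraph V) (u : ℕ → V) (hadj : ∀ t, G.Adj (u t) (u (t+1)))
    (n : ℕ) (hinj : ∀ s t, s < n → t < n → u s = u t → s = t) :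
    ∀ (m i : ℕ) (β : Bool), i + 2*m < n → (altWalk G u hadj m i β).support.Nodup := by
  intro m
  induction m with
  | zero =>
    intro i β _
    simp [altWalk, Walk.support_copy]
  | succ m ih =>
    intro i β hb
    simp only [altWalk, Walk.support_copy, Walk.support_cons, List.nodup_cons, List.mem_cons]
    refine ⟨?_, ?_, ih (i+2) β (by omega)⟩
    · rintro (h01 | hmem)
      · have := congrArg Prod.snd h01
        cases β <;> simp_all
      · obtain ⟨t, ht, hx⟩ := altWalk_mem G u hadj m (i+2) β _ hmem
        have h1 : u i = u (i+2+t) := congrArg Prod.fst hx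
        have := hinj i (i+2+t) (by omega) (by omega) h1
        omega
    · intro hmem
      obtain ⟨t, ht, hx⟩ := altWalk_mem G u hadj m (i+2) β _ hmem
      have h1 : u (i+1) = u (i+2+t) := congrArg Prod.fst hx
      have := hinj (i+1) (i+2+t) (by omega) (by omega) h1
      omega

lemma gs_last {G : SimpleGraph V} {u : ℕ → V} (hadj : ∀ t, G.Adj (u t) (u (t+1)))
    (m : ℕ) (hun : u (2 + 2*m + 1) = u 0) (β : Bool) :
    (greatShadow G).Adj (u (2 + 2*m), β) (u 0, !β) := by
  have h := gs_step hadj (2 + 2*m) β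
  rwa [hun] at h

/-- The long alternating walk from `(u 2, β)` to `(u 0, !β)` around the cycle. -/
def longW (G : SimpleGraph V) (u : ℕ → V) (hadj : ∀ t, G.Adj (u t) (u (t+1)))
    (m : ℕ) (hun : u (2 + 2*m + 1) = u 0) (β : Bool) :
    (greatShadow G).Walk (u 2, β) (u 0, !β) :=
  (altWalk G u hadj m 2 β).append (Walk.cons (gs_last hadj m hun β) Walk.nil)

lemma longW_isPath (G : SimpleGraph V) (u : ℕ → V) (hadj : ∀ t, G.Adj (u t) (u (t+1)))
    (m : ℕ) (hun : u (2 + 2*m + 1) = u 0) (β : Bool)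
    (n : ℕ) (hn : n = 2*m + 3) (hinj : ∀ s t, s < n → t < n → u s = u t → s = t) :
    (longW G u hadj m hun β).IsPath := by
  rw [Walk.isPath_def, longW, Walk.support_append, Walk.support_cons, Walk.support_nil,
    List.tail_cons, List.nodup_append]
  refine ⟨altWalk_nodup G u hadj n hinj m 2 β (by omega), List.nodup_singleton _, ?_⟩
  intro x hx y hy hx0
  rw [List.mem_singleton] at hy
  rw [hy] at hx0
  obtain ⟨t, ht, hform⟩ := altWalk_mem G u hadj m 2 β x hx
  rw [hx0] at hform
  have h1 : u 0 = u (2+t) := congrArg Prod.fst hform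
  have := hinj 0 (2+t) (by omega) (by omega) h1
  omega

lemma longW_interior (G : SimpleGraph V) (u : ℕ → V) (hadj : ∀ t, G.Adj (u t) (u (t+1)))
    (m : ℕ) (hun : u (2 + 2*m + 1) = u 0) (β : Bool)
    (n : ℕ) (hn : n = 2*m + 3) (hinj : ∀ s t, s < n → t < n → u s = u t → s = t) :
    ∀ x ∈ (longW G u hadj m hun β).interior,
      ∃ t, 1 ≤ t ∧ t ≤ 2*m ∧ x = (u (2+t), if t % 2 = 0 then β else !β) := by
  intro x hx
  rw [longW, interior_concat] at hx
  have hxs : x ∈ (altWalk G u hadj m 2 β).support := by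
    rw [Walk.support_eq_cons]
    exact List.mem_cons_of_mem _ hx
  obtain ⟨t, ht, hform⟩ := altWalk_mem G u hadj m 2 β x hxs
  refine ⟨t, ?_, ht, hform⟩
  by_contra h0
  have ht0 : t = 0 := by omega
  rw [ht0] at hform
  have hform : x = (u 2, β) := by simpa using hform
  have hnd := altWalk_nodup G u hadj n hinj m 2 β (by omega)
  rw [Walk.support_eq_cons, List.nodup_cons] at hnd
  rw [hform] at hx
  exact hnd.1 hx


lemma gs_TF {G : SimpleGraph V} {u : ℕ → V} (i j : ℕ) (h : i = j ∨ G.Adj (u i) (u j)) :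
    (greatShadow G).Adj (u i, true) (u j, false) := by
  refine ⟨?_, by simp, h.imp (fun e => by rw [e]) id⟩
  intro he
  have := congrArg Prod.snd he
  simp_all

lemma single_isPath {G : SimpleGraph V} {x y : V × Bool} (e : (greatShadow G).Adj x y) :
    (Walk.cons e Walk.nil).IsPath := by
  rw [Walk.isPath_def]
  simp [e.ne]

/-- The system of nine paths realizing `K₃,₃` in the great shadow. -/
def Qfun (G : SimpleGraph V) (u : ℕ → V) (hadj : ∀ t, G.Adj (u t) (u (t+1)))
    (m : ℕ) (hun : u (2 + 2*m + 1) = u 0) :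
    ∀ (i j : Fin 3), (greatShadow G).Walk (u i.val, true) (u j.val, false)
  | ⟨0,_⟩, ⟨0,_⟩ => Walk.cons (gs_TF 0 0 (Or.inl rfl)) Walk.nil
  | ⟨0,_⟩, ⟨1,_⟩ => Walk.cons (gs_TF 0 1 (Or.inr (hadj 0))) Walk.nil
  | ⟨0,_⟩, ⟨2,_⟩ => (longW G u hadj m hun false).reverse
  | ⟨1,_⟩, ⟨0,_⟩ => Walk.cons (gs_TF 1 0 (Or.inr (hadj 0).symm)) Walk.nil
  | ⟨1,_⟩, ⟨1,_⟩ => Walk.cons (gs_TF 1 1 (Or.inl rfl)) Walk.nil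
  | ⟨1,_⟩, ⟨2,_⟩ => Walk.cons (gs_TF 1 2 (Or.inr (hadj 1))) Walk.nil
  | ⟨2,_⟩, ⟨0,_⟩ => longW G u hadj m hun true
  | ⟨2,_⟩, ⟨1,_⟩ => Walk.cons (gs_TF 2 1 (Or.inr (hadj 1).symm)) Walk.nil
  | ⟨2,_⟩, ⟨2,_⟩ => Walk.cons (gs_TF 2 2 (Or.inl rfl)) Walk.nil
  | ⟨a+3,ha⟩, _ => absurd ha (by omega)
  | _, ⟨b+3,hb⟩ => absurd hb (by omega)

variable {G : SimpleGraph V} {u : ℕ → V} {hadj : ∀ t, G.Adj (u t) (u (t+1))}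
  {m : ℕ} {hun : u (2 + 2*m + 1) = u 0} {n : ℕ}

lemma Qfun_isPath (hn : n = 2*m + 3) (hinj : ∀ s t, s < n → t < n → u s = u t → s = t)
    (i j : Fin 3) : (Qfun G u hadj m hun i j).IsPath := by
  rcases i with ⟨iv, hi⟩
  rcases j with ⟨jv, hj⟩
  interval_cases iv <;> interval_cases jv <;> simp only [Qfun] <;>
    first
      | exact single_isPath _
      | exact longW_isPath G u hadj m hun true n hn hinj
      | exact (longW_isPath G u hadj m hun false n hn hinj).reverse

lemma Qfun_interior_nil (i j : Fin 3) (h1 : ¬(i.val = 0 ∧ j.val = 2))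
    (h2 : ¬(i.val = 2 ∧ j.val = 0)) : (Qfun G u hadj m hun i j).interior = [] := by
  rcases i with ⟨iv, hi⟩
  rcases j with ⟨jv, hj⟩
  simp only at h1 h2
  interval_cases iv <;> interval_cases jv <;> simp only [Qfun] <;>
    first
      | rfl
      | omega

lemma Qfun_interior_fst (hn : n = 2*m + 3) (hinj : ∀ s t, s < n → t < n → u s = u t → s = t)
    (i j : Fin 3) : ∀ x ∈ (Qfun G u hadj m hun i j).interior,
      ∃ t, 1 ≤ t ∧ t ≤ 2*m ∧ x.1 = u (2+t) := by
  intro x hx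
  by_cases h1 : (i.val = 0 ∧ j.val = 2) ∨ (i.val = 2 ∧ j.val = 0)
  · rcases i with ⟨iv, hi⟩
    rcases j with ⟨jv, hj⟩
    simp only at h1
    rcases h1 with ⟨rfl, rfl⟩ | ⟨rfl, rfl⟩
    · simp only [Qfun] at hx
      rw [mem_interior_reverse] at hx
      obtain ⟨t, ht1, ht2, hform⟩ := longW_interior G u hadj m hun false n hn hinj x hx
      exact ⟨t, ht1, ht2, by rw [hform]⟩
    · simp only [Qfun] at hx
      obtain ⟨t, ht1, ht2, hform⟩ := longW_interior G u hadj m hun true n hn hinj x hx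
      exact ⟨t, ht1, ht2, by rw [hform]⟩
  · rw [Qfun_interior_nil i j (fun h => h1 (Or.inl h)) (fun h => h1 (Or.inr h))] at hx
    exact absurd hx List.not_mem_nil

lemma longW_disj (hn : n = 2*m + 3) (hinj : ∀ s t, s < n → t < n → u s = u t → s = t) :
    ∀ x ∈ (longW G u hadj m hun true).interior, x ∉ (longW G u hadj m hun false).interior := by
  intro x hx hx'
  obtain ⟨t, ht1, ht2, hxt⟩ := longW_interior G u hadj m hun true n hn hinj x hx
  obtain ⟨s, hs1, hs2, hxs⟩ := longW_interior G u hadj m hun false n hn hinj x hx'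
  rw [hxt] at hxs
  have hfst : u (2+t) = u (2+s) := congrArg Prod.fst hxs
  have hts : t = s := by
    have := hinj (2+t) (2+s) (by omega) (by omega) hfst
    omega
  have hsnd := congrArg Prod.snd hxs
  rw [← hts] at hsnd
  simp only at hsnd
  split at hsnd <;> simp at hsnd

lemma Qfun_disj (hn : n = 2*m + 3) (hinj : ∀ s t, s < n → t < n → u s = u t → s = t)
    (i j k l : Fin 3) (hne : ¬(i = k ∧ j = l)) :
    ∀ x ∈ (Qfun G u hadj m hun i j).interior, x ∉ (Qfun G u hadj m hun k l).interior := by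
  intro x hx hx'
  by_cases h1 : (i.val = 0 ∧ j.val = 2) ∨ (i.val = 2 ∧ j.val = 0)
  · by_cases h2 : (k.val = 0 ∧ l.val = 2) ∨ (k.val = 2 ∧ l.val = 0)
    · rcases i with ⟨iv, hi⟩
      rcases j with ⟨jv, hj⟩
      rcases k with ⟨kv, hk⟩
      rcases l with ⟨lv, hl⟩
      simp only at h1 h2
      rcases h1 with ⟨rfl, rfl⟩ | ⟨rfl, rfl⟩ <;> rcases h2 with ⟨rfl, rfl⟩ | ⟨rfl, rfl⟩
      · exact hne ⟨rfl, rfl⟩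
      · simp only [Qfun] at hx hx'
        rw [mem_interior_reverse] at hx
        exact longW_disj hn hinj x hx' hx
      · simp only [Qfun] at hx hx'
        rw [mem_interior_reverse] at hx'
        exact longW_disj hn hinj x hx hx'
      · exact hne ⟨rfl, rfl⟩
    · rw [Qfun_interior_nil k l (fun h => h2 (Or.inl h)) (fun h => h2 (Or.inr h))] at hx'
      exact absurd hx' List.not_mem_nil
  · rw [Qfun_interior_nil i j (fun h => h1 (Or.inl h)) (fun h => h1 (Or.inr h))] at hx
    exact absurd hx List.not_mem_nil

lemma support_eq_map_getVert {G : SimpleGraph V} {a b : V} (p : G.Walk a b) :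
    p.support = (List.range (p.length+1)).map p.getVert := by
  induction p with
  | nil => simp [Walk.getVert]
  | cons h q ih =>
    rw [Walk.support_cons, Walk.length_cons, List.range_succ_eq_map, List.map_cons,
      List.map_map]
    exact congrArg₂ List.cons rfl ih

lemma cycle_getVert_inj {G : SimpleGraph V} {v : V} {c : G.Walk v v} (hc : c.IsCycle) :
    ∀ s t, s < c.length → t < c.length → c.getVert s = c.getVert t → s = t := by
  have hnd := hc.support_nodup
  rw [support_eq_map_getVert, List.range_succ_eq_map, List.map_cons, List.tail_cons,
    List.map_map] at hnd
  have key : ∀ a b, a < c.length → b < c.length → c.getVert (a+1) = c.getVert (b+1) → a = b := by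
    intro a b ha hb hab
    exact List.inj_on_of_nodup_map hnd (List.mem_range.mpr ha) (List.mem_range.mpr hb) hab
  have hlen : 1 ≤ c.length := by
    have := hc.three_le_length
    omega
  have hv0 : c.getVert 0 = c.getVert c.length := by
    rw [Walk.getVert_zero, Walk.getVert_length]
  intro s t hs ht hst
  match s, t with
  | 0, 0 => rfl
  | 0, b+1 =>
    exfalso
    have : c.length - 1 = b := by
      refine key _ _ (by omega) (by omega) ?_
      rw [show c.length - 1 + 1 = c.length from by omega, ← hv0, hst]
    omega
  | a+1, 0 =>
    exfalso
    have : a = c.length - 1 := by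
      refine key _ _ (by omega) (by omega) ?_
      rw [show c.length - 1 + 1 = c.length from by omega, ← hv0, ← hst]
    omega
  | a+1, b+1 =>
    have := key a b (by omega) (by omega) hst
    omega

lemma cbg_not_ll (a b : Fin 3) :
    ¬(completeBipartiteGraph (Fin 3) (Fin 3)).Adj (Sum.inl a) (Sum.inl b) := by
  simp [completeBipartiteGraph]

lemma cbg_not_rr (a b : Fin 3) :
    ¬(completeBipartiteGraph (Fin 3) (Fin 3)).Adj (Sum.inr a) (Sum.inr b) := by
  simp [completeBipartiteGraph]

end TK33
end AuxTK33

/-- If `G` contains an odd cycle, then `S(G)` contains a subdivision of `K₃,₃`. -/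
theorem greatShadow_oddCycle_contains_TK33 {V : Type u} (G : SimpleGraph V)
    (h : ∃ (v : V) (c : G.Walk v v), c.IsCycle ∧ Odd c.length) :
    ContainsSubdivision (completeBipartiteGraph (Fin 3) (Fin 3)) (greatShadow G) := by
  classical
  obtain ⟨v, c, hc, hodd⟩ := h
  obtain ⟨m, hm⟩ : ∃ m, c.length = 2*m + 3 := by
    obtain ⟨k, hk⟩ := hodd
    have h3 := hc.three_le_length
    exact ⟨k - 1, by omega⟩
  set n := c.length with hn
  set u : ℕ → V := fun i => c.getVert (i % n) with hu
  have hn0 : 0 < n := by omega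
  have hadj : ∀ t, G.Adj (u t) (u (t+1)) := by
    intro t
    have h1 : t % n < n := Nat.mod_lt _ hn0
    show G.Adj (c.getVert (t % n)) (c.getVert ((t+1) % n))
    by_cases h2 : t % n + 1 < n
    · have h3 : (t+1) % n = t % n + 1 := by
        conv_lhs => rw [show t + 1 = (t % n + 1) + n * (t / n) from by have := Nat.mod_add_div t n; omega]
        rw [Nat.add_mul_mod_self_left, Nat.mod_eq_of_lt h2]
      rw [h3]
      exact c.adj_getVert_succ (by omega)
    · have h5 : (t+1) % n = 0 := by
        conv_lhs => rw [show t + 1 = n + n * (t / n) from by have := Nat.mod_add_div t n; omega]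
        rw [Nat.add_mul_mod_self_left, Nat.mod_self]
      rw [show t % n = n - 1 from by omega, h5]
      have h6 := c.adj_getVert_succ (show n - 1 < c.length from by omega)
      rw [show n - 1 + 1 = c.length from by omega, SimpleGraph.Walk.getVert_length] at h6
      rw [SimpleGraph.Walk.getVert_zero]
      exact h6
  have hinj : ∀ s t, s < n → t < n → u s = u t → s = t := by
    intro s t hs ht hst
    simp only [hu] at hst
    rw [Nat.mod_eq_of_lt hs, Nat.mod_eq_of_lt ht] at hst
    exact TK33.cycle_getVert_inj hc s t hs ht hst
  have hun : u (2 + 2*m + 1) = u 0 := by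
    simp only [hu]
    rw [show 2 + 2*m + 1 = n from by omega, Nat.mod_self, Nat.zero_mod]
  refine ⟨Sum.elim (fun i : Fin 3 => (u i.val, true)) (fun i : Fin 3 => (u i.val, false)),
    ?_,
    fun x y hxy =>
      match x, y, hxy with
      | Sum.inl i, Sum.inr j, _ => TK33.Qfun G u hadj m hun i j
      | Sum.inr j, Sum.inl i, _ => (TK33.Qfun G u hadj m hun i j).reverse
      | Sum.inl i, Sum.inl j, hxy => absurd hxy (by simp [completeBipartiteGraph])
      | Sum.inr i, Sum.inr j, hxy => absurd hxy (by simp [completeBipartiteGraph]),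
    ?_, ?_, ?_, ?_⟩
  · -- injectivity of f
    rintro (i | i) (j | j) hxy <;>
      simp only [Sum.elim_inl, Sum.elim_inr, Prod.mk.injEq] at hxy
    · have hi := i.isLt
      have hj := j.isLt
      exact congrArg Sum.inl (Fin.ext (hinj i.val j.val (by omega) (by omega) hxy.1))
    · exact absurd hxy.2 (by simp)
    · exact absurd hxy.2 (by simp)
    · have hi := i.isLt
      have hj := j.isLt
      exact congrArg Sum.inr (Fin.ext (hinj i.val j.val (by omega) (by omega) hxy.1))
  · -- paths
    rintro (i | i) (j | j) hxy
    · exact absurd hxy (by simp [completeBipartiteGraph])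
    · exact TK33.Qfun_isPath hm hinj i j
    · exact (TK33.Qfun_isPath hm hinj j i).reverse
    · exact absurd hxy (by simp [completeBipartiteGraph])
  · -- reverse compatibility
    rintro (i | i) (j | j) hxy
    · exact absurd hxy (by simp [completeBipartiteGraph])
    · rfl
    · exact (SimpleGraph.Walk.reverse_reverse _).symm
    · exact absurd hxy (by simp [completeBipartiteGraph])
  · -- interiors avoid branch vertices
    have key : ∀ (i j : Fin 3), ∀ x ∈ (TK33.Qfun G u hadj m hun i j).interior,
        x ∉ Set.range (Sum.elim (fun i : Fin 3 => (u i.val, true))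
          (fun i : Fin 3 => (u i.val, false))) := by
      intro i j x hx hmem
      obtain ⟨t, ht1, ht2, hfst⟩ := TK33.Qfun_interior_fst hm hinj i j x hx
      obtain ⟨y, hy⟩ := hmem
      have hxy : x.1 = u (Sum.elim (fun i : Fin 3 => i.val) (fun i : Fin 3 => i.val) y) ∧
          (Sum.elim (fun i : Fin 3 => i.val) (fun i : Fin 3 => i.val) y) < 3 := by
        rcases y with k | k
        · exact ⟨(congrArg Prod.fst hy).symm, k.isLt⟩
        · exact ⟨(congrArg Prod.fst hy).symm, k.isLt⟩
      have := hinj (2+t) _ (by omega) (by omega) (hfst.symm.trans hxy.1)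
      omega
    rintro (i | i) (j | j) hxy x hx
    · exact absurd hxy (by simp [completeBipartiteGraph])
    · exact key i j x hx
    · exact key j i x ((TK33.mem_interior_reverse _ x).mp hx)
    · exact absurd hxy (by simp [completeBipartiteGraph])
  · -- internal disjointness
    have hne' : ∀ (i j k l : Fin 3),
        (s(Sum.inl i, Sum.inr j) : Sym2 (Fin 3 ⊕ Fin 3)) ≠ s(Sum.inl k, Sum.inr l) →
        ¬(i = k ∧ j = l) := by
      rintro i j k l hs ⟨rfl, rfl⟩
      exact hs rfl
    rintro (i | i) (j | j) (k | k) (l | l) hxy hab hs x hx <;>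
      first
        | exact absurd hxy (TK33.cbg_not_ll _ _)
        | exact absurd hxy (TK33.cbg_not_rr _ _)
        | exact absurd hab (TK33.cbg_not_ll _ _)
        | exact absurd hab (TK33.cbg_not_rr _ _)
        | skip
    · exact TK33.Qfun_disj hm hinj i j k l (hne' i j k l hs) x hx
    · exact fun hmem => TK33.Qfun_disj hm hinj i j l k
        (hne' i j l k (fun hk => hs (hk.trans Sym2.eq_swap))) x hx
        ((TK33.mem_interior_reverse _ x).mp hmem)
    · exact TK33.Qfun_disj hm hinj j i k l
        (hne' j i k l (fun hk => hs (Sym2.eq_swap.trans hk))) x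
        ((TK33.mem_interior_reverse _ x).mp hx)
    · exact fun hmem => TK33.Qfun_disj hm hinj j i l k
        (hne' j i l k (fun hk => hs (Sym2.eq_swap.trans (hk.trans Sym2.eq_swap)))) x
        ((TK33.mem_interior_reverse _ x).mp hx)
        ((TK33.mem_interior_reverse _ x).mp hmem)
end

section
/- For an odd cycle C of length at least 3, the great shadow S(C) contains a subdivision of the square of C (the graph on V(C) where vertices at distance at most 2 on the cycle are adjacent) as a subgraph. -/
universe u w

namespace Aux
open SimpleGraph

variable {n : ℕ}

lemma one_ne_zero' (hn : 3 ≤ n) : (1 : ZMod n) ≠ 0 := by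
  haveI : NeZero n := ⟨by omega⟩
  intro h
  rw [show (1 : ZMod n) = ((1:ℕ) : ZMod n) by norm_cast, ZMod.natCast_eq_zero_iff] at h
  have := Nat.le_of_dvd (by norm_num) h
  omega

lemma four_ne_zero' (hodd : Odd n) (hn : 3 ≤ n) : (4 : ZMod n) ≠ 0 := by
  haveI : NeZero n := ⟨by omega⟩
  intro h
  rw [show (4 : ZMod n) = ((4:ℕ) : ZMod n) by norm_cast, ZMod.natCast_eq_zero_iff] at h
  have := Nat.le_of_dvd (by norm_num) h
  rw [Nat.odd_iff] at hodd
  interval_cases n <;> omega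

lemma cyc_adj {u v : ZMod n} (hne : u ≠ v) (h : u - v = 1 ∨ v - u = 1) : (cycleG n).Adj u v := by
  rw [cycleG, SimpleGraph.fromRel_adj]; exact ⟨hne, h⟩

lemma gs_ff {u v : ZMod n} (h : (cycleG n).Adj u v) :
    (greatShadow (cycleG n)).Adj (u, false) (v, false) :=
  ⟨by simp [Prod.ext_iff]; exact h.ne, by simp, Or.inr h⟩

lemma gs_ft {a m : ZMod n} (h : a = m ∨ (cycleG n).Adj a m) :
    (greatShadow (cycleG n)).Adj (a, false) (m, true) :=
  ⟨by simp [Prod.ext_iff], by simp, h⟩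

lemma gs_tf {m a : ZMod n} (h : m = a ∨ (cycleG n).Adj m a) :
    (greatShadow (cycleG n)).Adj (m, true) (a, false) :=
  ⟨by simp [Prod.ext_iff], by simp, h⟩

lemma sq_adj {u v : ZMod n} (h : (cycleSq n).Adj u v) :
    u ≠ v ∧ ((u - v = 1 ∨ u - v = 2) ∨ (v - u = 1 ∨ v - u = 2)) := by
  rwa [cycleSq, SimpleGraph.fromRel_adj] at h

lemma dist2 {u v : ZMod n} (h : (cycleSq n).Adj u v) (h1 : ¬(u - v = 1 ∨ v - u = 1))
    (h2 : u - v ≠ 2) : v - u = 2 := by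
  have := sq_adj h
  tauto

-- adjacency facts for branch 2 (u - v = 2, midpoint v + 1)
lemma adjB1 (hn : 3 ≤ n) {u v : ZMod n} (h2 : u - v = 2) : (cycleG n).Adj u (v + 1) := by
  have hd : u - (v + 1) = 1 := by linear_combination h2
  exact cyc_adj (fun heq => one_ne_zero' hn (by rw [← hd, heq]; ring)) (Or.inl hd)

lemma adjB2 (hn : 3 ≤ n) (v : ZMod n) : (cycleG n).Adj (v + 1) v := by
  refine cyc_adj ?_ (Or.inl (by ring))
  intro h; exact one_ne_zero' hn (by linear_combination h)

lemma adjC2 (hn : 3 ≤ n) {u v : ZMod n} (h2 : v - u = 2) : (cycleG n).Adj (u + 1) v := by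
  have := (adjB1 hn h2).symm
  exact this

def sqPath (hodd : Odd n) (hn : 3 ≤ n) (u v : ZMod n) (h : (cycleSq n).Adj u v) :
    (greatShadow (cycleG n)).Walk (u, false) (v, false) :=
  if h1 : u - v = 1 ∨ v - u = 1 then
    .cons (gs_ff (cyc_adj (sq_adj h).1 h1)) .nil
  else if h2 : u - v = 2 then
    .cons (gs_ft (Or.inr (adjB1 hn h2))) (.cons (gs_tf (Or.inr (adjB2 hn v))) .nil)
  else
    .cons (gs_ft (Or.inr ((adjB2 hn u).symm)))
      (.cons (gs_tf (Or.inr (adjC2 hn (dist2 h h1 h2)))) .nil)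


lemma sqPath_symm (hodd : Odd n) (hn : 3 ≤ n) (u v : ZMod n) (h : (cycleSq n).Adj u v) :
    sqPath hodd hn v u h.symm = (sqPath hodd hn u v h).reverse := by
  by_cases h1 : u - v = 1 ∨ v - u = 1
  · rw [sqPath, sqPath, dif_pos h1, dif_pos (Or.symm h1)]
    simp [SimpleGraph.Walk.reverse_cons]
  · by_cases h2 : u - v = 2
    · have h2' : ¬ v - u = 2 := fun hc => four_ne_zero' hodd hn (by linear_combination - h2 - hc)
      rw [sqPath, sqPath, dif_neg h1, dif_neg (fun hc => h1 (Or.symm hc)), dif_pos h2,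
        dif_neg h2']
      simp [SimpleGraph.Walk.reverse_cons]
    · have h2' : v - u = 2 := dist2 h h1 h2
      rw [sqPath, sqPath, dif_neg h1, dif_neg (fun hc => h1 (Or.symm hc)), dif_neg h2,
        dif_pos h2']
      simp [SimpleGraph.Walk.reverse_cons]

lemma sqPath_isPath (hodd : Odd n) (hn : 3 ≤ n) (u v : ZMod n) (h : (cycleSq n).Adj u v) :
    (sqPath hodd hn u v h).IsPath := by
  have hne := (sq_adj h).1
  rw [sqPath]
  split_ifs with h1 h2 <;>
    simp [SimpleGraph.Walk.cons_isPath_iff, Prod.ext_iff, hne]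

lemma sqPath_interior (hodd : Odd n) (hn : 3 ≤ n) (u v : ZMod n) (h : (cycleSq n).Adj u v) :
    (sqPath hodd hn u v h).interior =
      if u - v = 1 ∨ v - u = 1 then [] else if u - v = 2 then [(v + 1, true)]
        else [(u + 1, true)] := by
  rw [sqPath]
  split_ifs with h1 h2 <;> simp [SimpleGraph.Walk.interior]

end Aux

open Aux in
lemma interior_mem {n : ℕ} {hodd : Odd n} {hn : 3 ≤ n} {u v : ZMod n}
    {h : (cycleSq n).Adj u v} {x : ZMod n × Bool}
    (hx : x ∈ (sqPath hodd hn u v h).interior) :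
    ∃ m : ZMod n, x = (m, true) ∧ s(u, v) = s(m - 1, m + 1) := by
  rw [sqPath_interior] at hx
  split_ifs at hx with h1 h2
  · simp at hx
  · refine ⟨v + 1, by simpa using hx, ?_⟩
    rw [show (v+1) - 1 = v by ring, show (v+1) + 1 = v + 2 by ring,
      show u = v + 2 by linear_combination h2]
    exact Sym2.eq_swap
  · refine ⟨u + 1, by simpa using hx, ?_⟩
    rw [show (u+1) - 1 = u by ring, show (u+1) + 1 = u + 2 by ring,
      show v = u + 2 by linear_combination dist2 h h1 h2]

/-- For an odd cycle `C` of length at least 3, `S(C)` contains a subdivision of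
the square of `C`. -/
theorem greatShadow_oddCycle_contains_square (n : ℕ) (hodd : Odd n) (hn : 3 ≤ n) :
    ContainsSubdivision (cycleSq n) (greatShadow (cycleG n)) := by
  refine ⟨fun v => (v, false), fun a b hab => by simpa using congrArg Prod.fst hab,
    Aux.sqPath hodd hn, Aux.sqPath_isPath hodd hn, Aux.sqPath_symm hodd hn, ?_, ?_⟩
  · intro u v h x hx hxr
    obtain ⟨w, hw⟩ := hxr
    obtain ⟨m, hm, -⟩ := interior_mem hx
    rw [hm] at hw
    simpa using congrArg Prod.snd hw
  · intro u v a b h h' hne x hx hx'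
    obtain ⟨m, hm, hs⟩ := interior_mem hx
    obtain ⟨m', hm', hs'⟩ := interior_mem hx'
    rw [hm] at hm'
    have : m = m' := by simpa using congrArg Prod.fst hm'
    rw [this] at hs
    exact hne (hs.trans hs'.symm)
end

section
/- For every even cycle C (of length 2n, n ≥ 2), the great shadow S(C) is planar. -/
universe u w

section
open Real
namespace GSP

/-- linear interpolation in the strip -/
def lerp (t : ℝ) (p q : ℝ × ℝ) : ℝ × ℝ := ((1-t)*p.1 + t*q.1, (1-t)*p.2 + t*q.2)

@[simp] lemma lerp_fst (t : ℝ) (p q : ℝ × ℝ) : (lerp t p q).1 = (1-t)*p.1 + t*q.1 := rfl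
@[simp] lemma lerp_snd (t : ℝ) (p q : ℝ × ℝ) : (lerp t p q).2 = (1-t)*p.2 + t*q.2 := rfl

@[simp] lemma lerp_zero (p q : ℝ × ℝ) : lerp 0 p q = p := by simp [lerp]
@[simp] lemma lerp_one (p q : ℝ × ℝ) : lerp 1 p q = q := by simp [lerp]

lemma lerp_comm (t : ℝ) (p q : ℝ × ℝ) : lerp t p q = lerp (1-t) q p := by
  simp only [lerp, Prod.mk.injEq]; constructor <;> ring

/-- the wrapping map, complex valued -/
noncomputable def Phi (n : ℕ) (p : ℝ × ℝ) : ℂ :=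
  (↑(p.2 + 1) : ℂ) * Complex.exp ((↑(p.1 * (π / n)) : ℂ) * Complex.I)

lemma phi_abs (n : ℕ) (p : ℝ × ℝ) (hp : 0 ≤ p.2) : ‖Phi n p‖ = p.2 + 1 := by
  rw [Phi, norm_mul, Complex.norm_exp_ofReal_mul_I, Complex.norm_real, Real.norm_eq_abs, abs_of_nonneg (by linarith)]
  ring

lemma phi_cont (n : ℕ) : Continuous (Phi n) := by
  unfold Phi
  exact (Complex.continuous_ofReal.comp (continuous_snd.add continuous_const)).mul
    (Complex.continuous_exp.comp
      ((Complex.continuous_ofReal.comp (continuous_fst.mul continuous_const)).mul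
        continuous_const))

lemma phi_eq_iff {n : ℕ} (hn : 2 ≤ n) {p q : ℝ × ℝ}
    (hp2 : 0 ≤ p.2) (hq2 : 0 ≤ q.2)
    (hp0 : 0 ≤ p.1) (hpN : p.1 ≤ 2*n) (hq0 : 0 ≤ q.1) (hqN : q.1 ≤ 2*n) :
    Phi n p = Phi n q ↔
      p.2 = q.2 ∧ (p.1 = q.1 ∨ (p.1 = 0 ∧ q.1 = 2*n) ∨ (p.1 = 2*n ∧ q.1 = 0)) := by
  have hnR : (0:ℝ) < n := by exact_mod_cast (by omega : 0 < n)
  have hpi : (0:ℝ) < π := Real.pi_pos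
  constructor
  · intro h
    have hy : p.2 = q.2 := by
      have h1 := congrArg (‖·‖) h
      rw [phi_abs n p hp2, phi_abs n q hq2] at h1
      linarith
    refine ⟨hy, ?_⟩
    have hne : ((↑(p.2 + 1) : ℂ)) ≠ 0 := by
      simp only [ne_eq, Complex.ofReal_eq_zero]
      intro hc; linarith
    rw [Phi, Phi, ← hy] at h
    have h2 := mul_left_cancel₀ hne h
    rw [Complex.exp_eq_exp_iff_exists_int] at h2
    obtain ⟨k, hk⟩ := h2
    have him := congrArg Complex.im hk
    simp [Complex.add_im, Complex.mul_im] at him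
    -- him : p.1 * (π / n) = q.1 * (π / n) + k * (2 * π)
    have hk' : p.1 = q.1 + k * (2 * n) := by
      have hn0 : (n:ℝ) ≠ 0 := ne_of_gt hnR
      field_simp at him
      nlinarith [him]
    have hb1 : (k:ℝ) * (2*n) ≤ 2*n := by nlinarith
    have hb2 : -(2*(n:ℝ)) ≤ k * (2*n) := by nlinarith
    have hk1 : (k:ℝ) ≤ 1 := by nlinarith
    have hk2 : (-1:ℝ) ≤ k := by nlinarith
    have hk1' : k ≤ 1 := by exact_mod_cast hk1
    have hk2' : (-1:ℤ) ≤ k := by exact_mod_cast hk2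
    interval_cases k <;> push_cast at hk'
    · exact Or.inr (Or.inl ⟨by linarith, by linarith⟩)
    · exact Or.inl (by linarith)
    · exact Or.inr (Or.inr ⟨by linarith, by linarith⟩)
  · rintro ⟨hy, h | ⟨h1, h2⟩ | ⟨h1, h2⟩⟩
    · rw [Phi, Phi, hy, h]
    · rw [Phi, Phi, hy, h1, h2]
      congr 1
      rw [show ((0:ℝ) * (π/n)) = 0 by ring, show ((2*(n:ℝ)) * (π/n)) = 2*π by field_simp]
      rw [Complex.ofReal_zero, zero_mul, Complex.exp_zero]
      rw [show ((↑(2*π):ℂ) * Complex.I) = 2*↑π*Complex.I by push_cast; ring,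
        Complex.exp_two_pi_mul_I]
    · rw [Phi, Phi, hy, h1, h2]
      congr 1
      rw [show ((0:ℝ) * (π/n)) = 0 by ring, show ((2*(n:ℝ)) * (π/n)) = 2*π by field_simp]
      rw [Complex.ofReal_zero, zero_mul, Complex.exp_zero]
      rw [show ((↑(2*π):ℂ) * Complex.I) = 2*↑π*Complex.I by push_cast; ring,
        Complex.exp_two_pi_mul_I]


variable {n : ℕ}

/-- x coordinate (as a natural number) of the endpoint `u` of the directed edge `(u,v)`. -/
def xnat (n : ℕ) (u v : ZMod (2*n) × Bool) : ℕ :=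
  if u.1.val = 0 ∧ v.1.val = 2*n - 1 then 2*n else u.1.val

/-- y coordinate of a vertex. -/
def ynat (n : ℕ) (u : ZMod (2*n) × Bool) : ℕ :=
  if u.2 then (if u.1.val % 2 = 0 then 0 else 2) else 1

def pos (n : ℕ) (u v : ZMod (2*n) × Bool) : ℝ × ℝ := ((xnat n u v : ℝ), (ynat n u : ℝ))
def vpos (n : ℕ) (u : ZMod (2*n) × Bool) : ℝ × ℝ := ((u.1.val : ℝ), (ynat n u : ℝ))

lemma xnat_le (hn : 2 ≤ n) (u v : ZMod (2*n) × Bool) : xnat n u v ≤ 2*n := by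
  haveI : NeZero (2*n) := ⟨by omega⟩
  rw [xnat]; split
  · exact le_refl _
  · exact le_of_lt (ZMod.val_lt u.1)

lemma xnat_spec (hn : 2 ≤ n) (u v : ZMod (2*n) × Bool) :
    xnat n u v = u.1.val ∨ (u.1.val = 0 ∧ xnat n u v = 2*n) := by
  rw [xnat]; split
  · next h => exact Or.inr ⟨h.1, rfl⟩
  · exact Or.inl rfl

lemma xnat_parity (hn : 2 ≤ n) (u v : ZMod (2*n) × Bool) :
    xnat n u v % 2 = u.1.val % 2 := by
  rcases xnat_spec hn u v with h | ⟨h1, h2⟩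
  · rw [h]
  · rw [h2, h1]; omega

lemma ynat_le (u : ZMod (2*n) × Bool) : ynat n u ≤ 2 := by
  rw [ynat]; split <;> [split <;> omega; omega]

lemma ynat_one_iff (u : ZMod (2*n) × Bool) : ynat n u = 1 ↔ u.2 = false := by
  rw [ynat]; rcases u.2 with _|_ <;> simp <;> split <;> omega

lemma ynat_zero (u : ZMod (2*n) × Bool) (h : ynat n u = 0) :
    u.2 = true ∧ u.1.val % 2 = 0 := by
  rcases hu : u.2 with _|_ <;> simp [ynat, hu] at h <;> simp [hu]
  omega

lemma ynat_two (u : ZMod (2*n) × Bool) (h : ynat n u = 2) :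
    u.2 = true ∧ u.1.val % 2 = 1 := by
  rcases hu : u.2 with _|_ <;> simp [ynat, hu] at h <;> simp [hu]
  omega

/-- recovery of a vertex from its drawn position -/
lemma pos_inj (hn : 2 ≤ n) {u v a b : ZMod (2*n) × Bool}
    (h : pos n u v = pos n a b) : u = a := by
  haveI : NeZero (2*n) := ⟨by omega⟩
  have hx : xnat n u v = xnat n a b := by
    have := congrArg Prod.fst h; simpa [pos] using Nat.cast_injective this
  have hy : ynat n u = ynat n a := by
    have := congrArg Prod.snd h; simpa [pos] using Nat.cast_injective this
  have hu' := ZMod.val_lt u.1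
  have ha' := ZMod.val_lt a.1
  have hval : u.1.val = a.1.val := by
    rcases xnat_spec hn u v with h1 | ⟨h1, h1'⟩ <;>
      rcases xnat_spec hn a b with h2 | ⟨h2, h2'⟩ <;> omega
  have h1 : u.1 = a.1 := ZMod.val_injective _ hval
  have h2 : u.2 = a.2 := by
    rcases hu : u.2 with _|_ <;> rcases ha : a.2 with _|_
    · rfl
    · exfalso; simp [ynat, hu, ha] at hy; split at hy <;> omega
    · exfalso; simp [ynat, hu, ha] at hy; split at hy <;> omega
    · rfl
  exact Prod.ext h1 h2


lemma adj_elim {u v : ZMod (2*n) × Bool} (h : (greatShadow (cycleG (2*n))).Adj u v) :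
    u ≠ v ∧ ¬(u.2 = true ∧ v.2 = true) ∧
      (u.1 = v.1 ∨ (u.1 ≠ v.1 ∧ (u.1 - v.1 = 1 ∨ v.1 - u.1 = 1))) := by
  obtain ⟨h1, h2, h3⟩ : u ≠ v ∧ ¬(u.2 = true ∧ v.2 = true) ∧
      (u.1 = v.1 ∨ (cycleG (2*n)).Adj u.1 v.1) := h
  refine ⟨h1, h2, ?_⟩
  rcases h3 with h | h
  · exact Or.inl h
  · rw [cycleG, SimpleGraph.fromRel_adj] at h
    exact Or.inr ⟨h.1, h.2⟩

lemma idx_cases (hn : 2 ≤ n) {a b : ZMod (2*n)} (hd : a - b = 1 ∨ b - a = 1) :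
    (a.val = b.val + 1 ∨ b.val = a.val + 1) ∨
      ((a.val = 0 ∧ b.val = 2*n - 1) ∨ (b.val = 0 ∧ a.val = 2*n - 1)) := by
  haveI : NeZero (2*n) := ⟨by omega⟩
  haveI : Fact (1 < 2*n) := ⟨by omega⟩
  have key : ∀ c d : ZMod (2*n), c - d = 1 →
      (c.val = d.val + 1 ∨ (c.val = 0 ∧ d.val = 2*n - 1)) := by
    intro c d hcd
    have hc : c = d + 1 := by rw [sub_eq_iff_eq_add] at hcd; rw [hcd]; ring
    have hv : c.val = (d.val + 1) % (2*n) := by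
      rw [hc, ZMod.val_add, ZMod.val_one]
    have hdlt := ZMod.val_lt d
    rcases Nat.lt_or_ge (d.val + 1) (2*n) with hlt | hge
    · rw [Nat.mod_eq_of_lt hlt] at hv; exact Or.inl hv
    · have : d.val + 1 = 2*n := by omega
      rw [this, Nat.mod_self] at hv
      exact Or.inr ⟨hv, by omega⟩
  rcases hd with h | h
  · rcases key a b h with h' | h'
    · exact Or.inl (Or.inl h')
    · exact Or.inr (Or.inl h')
  · rcases key b a h with h' | h'
    · exact Or.inl (Or.inr h')
    · exact Or.inr (Or.inr h')

lemma xnat_adj (hn : 2 ≤ n) {u v : ZMod (2*n) × Bool}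
    (hd : u.1 - v.1 = 1 ∨ v.1 - u.1 = 1) :
    xnat n u v = xnat n v u + 1 ∨ xnat n v u = xnat n u v + 1 := by
  haveI : NeZero (2*n) := ⟨by omega⟩
  have hu := ZMod.val_lt u.1
  have hv := ZMod.val_lt v.1
  rcases idx_cases hn hd with (h | h) | (⟨h1, h2⟩ | ⟨h1, h2⟩)
  · -- u.val = v.val + 1 : no lifts
    have e1 : xnat n u v = u.1.val := by rw [xnat]; split <;> omega
    have e2 : xnat n v u = v.1.val := by rw [xnat]; split <;> omega
    omega
  · have e1 : xnat n u v = u.1.val := by rw [xnat]; split <;> omega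
    have e2 : xnat n v u = v.1.val := by rw [xnat]; split <;> omega
    omega
  · -- u.val = 0, v.val = 2n-1 : u lifted
    have e1 : xnat n u v = 2*n := by rw [xnat]; split <;> omega
    have e2 : xnat n v u = v.1.val := by rw [xnat]; split <;> omega
    omega
  · have e1 : xnat n v u = 2*n := by rw [xnat]; split <;> omega
    have e2 : xnat n u v = u.1.val := by rw [xnat]; split <;> omega
    omega

lemma xnat_vert (hn : 2 ≤ n) {u v : ZMod (2*n) × Bool} (h : u.1 = v.1) :
    xnat n u v = u.1.val ∧ xnat n v u = u.1.val := by
  haveI : NeZero (2*n) := ⟨by omega⟩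
  have hu := ZMod.val_lt u.1
  have hval : u.1.val = v.1.val := by rw [h]
  constructor <;> [rw [xnat]; rw [xnat]] <;> split <;> omega

/-- the drawn endpoint agrees with the vertex position up to the wrap -/
lemma phi_pos_vpos (hn : 2 ≤ n) (u v : ZMod (2*n) × Bool) :
    Phi n (pos n u v) = Phi n (vpos n u) := by
  haveI : NeZero (2*n) := ⟨by omega⟩
  have hu := ZMod.val_lt u.1
  rcases xnat_spec hn u v with h | ⟨h1, h2⟩
  · rw [pos, vpos, h]
  · rw [pos, vpos, h1, h2]
    have h2n : ((2*n : ℕ) : ℝ) = 2*(n:ℝ) := by push_cast; ring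
    rw [phi_eq_iff hn]
    · refine ⟨rfl, Or.inr (Or.inr ⟨h2n, by norm_num⟩)⟩
    all_goals first
      | positivity
      | exact le_of_eq h2n
      | norm_num

lemma vpos_inj (hn : 2 ≤ n) {u w : ZMod (2*n) × Bool}
    (h : Phi n (vpos n u) = Phi n (vpos n w)) : u = w := by
  haveI : NeZero (2*n) := ⟨by omega⟩
  have hu := ZMod.val_lt u.1
  have hw := ZMod.val_lt w.1
  have bu : ((u.1.val : ℝ)) ≤ 2*n := by exact_mod_cast le_of_lt (by exact_mod_cast hu)
  have bw : ((w.1.val : ℝ)) ≤ 2*n := by exact_mod_cast le_of_lt (by exact_mod_cast hw)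
  rw [vpos, vpos, phi_eq_iff hn (by positivity) (by positivity) (by positivity) bu
    (by positivity) bw] at h
  obtain ⟨hy, hx⟩ := h
  simp only at hy hx
  have hval : u.1.val = w.1.val := by
    rcases hx with h | ⟨h1, h2⟩ | ⟨h1, h2⟩
    · exact_mod_cast h
    · exfalso
      have : w.1.val = 2*n := by exact_mod_cast h2
      omega
    · exfalso
      have : u.1.val = 2*n := by exact_mod_cast h1
      omega
  have hyy : ynat n u = ynat n w := by exact_mod_cast hy
  have h1 : u.1 = w.1 := ZMod.val_injective _ hval
  have h2 : u.2 = w.2 := by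
    rcases hu2 : u.2 with _|_ <;> rcases hw2 : w.2 with _|_
    · rfl
    · exfalso; simp [ynat, hu2, hw2] at hyy; split at hyy <;> omega
    · exfalso; simp [ynat, hu2, hw2] at hyy; split at hyy <;> omega
    · rfl
  exact Prod.ext h1 h2

variable {n : ℕ}

/-- Classification of an interior point of an edge segment. -/
lemma norm_form (hn : 2 ≤ n) {u v : ZMod (2*n) × Bool}
    (h : (greatShadow (cycleG (2*n))).Adj u v) {t : ℝ}
    (ht0 : 0 < t) (ht1 : t < 1) :
    -- vertical
    ((lerp t (pos n u v) (pos n v u)).1 = (u.1.val : ℝ) ∧ u.1.val < 2*n ∧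
       ((0 < (lerp t (pos n u v) (pos n v u)).2 ∧ (lerp t (pos n u v) (pos n v u)).2 < 1) ∨
        (1 < (lerp t (pos n u v) (pos n v u)).2 ∧ (lerp t (pos n u v) (pos n v u)).2 < 2)) ∧
       u.1 = v.1 ∧ u.2 ≠ v.2)
    ∨ -- horizontal
    (∃ m : ℕ, (lerp t (pos n u v) (pos n v u)).2 = 1 ∧
       (m:ℝ) < (lerp t (pos n u v) (pos n v u)).1 ∧
       (lerp t (pos n u v) (pos n v u)).1 < (m:ℝ)+1 ∧
       ((pos n u v = ((m:ℝ),1) ∧ pos n v u = ((m:ℝ)+1,1)) ∨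
        (pos n v u = ((m:ℝ),1) ∧ pos n u v = ((m:ℝ)+1,1))))
    ∨ -- lower diagonal
    (∃ α β : ℕ, α % 2 = 0 ∧ (β = α+1 ∨ α = β+1) ∧ α ≤ 2*n ∧ β ≤ 2*n ∧
       0 < (lerp t (pos n u v) (pos n v u)).2 ∧ (lerp t (pos n u v) (pos n v u)).2 < 1 ∧
       (lerp t (pos n u v) (pos n v u)).1 =
         (1-(lerp t (pos n u v) (pos n v u)).2)*α + (lerp t (pos n u v) (pos n v u)).2*β ∧
       ((pos n u v = ((α:ℝ),0) ∧ pos n v u = ((β:ℝ),1)) ∨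
        (pos n v u = ((α:ℝ),0) ∧ pos n u v = ((β:ℝ),1))))
    ∨ -- upper diagonal
    (∃ α β : ℕ, α % 2 = 1 ∧ (β = α+1 ∨ α = β+1) ∧ α ≤ 2*n ∧ β ≤ 2*n ∧
       1 < (lerp t (pos n u v) (pos n v u)).2 ∧ (lerp t (pos n u v) (pos n v u)).2 < 2 ∧
       (lerp t (pos n u v) (pos n v u)).1 =
         ((lerp t (pos n u v) (pos n v u)).2-1)*α + (2-(lerp t (pos n u v) (pos n v u)).2)*β ∧
       ((pos n u v = ((α:ℝ),2) ∧ pos n v u = ((β:ℝ),1)) ∨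
        (pos n v u = ((α:ℝ),2) ∧ pos n u v = ((β:ℝ),1)))) := by
  haveI : NeZero (2*n) := ⟨by omega⟩
  obtain ⟨hne, hnb, hcase⟩ := adj_elim h
  rcases hcase with hv | ⟨hne1, hd⟩
  · -- vertical
    left
    obtain ⟨e1, e2⟩ := xnat_vert hn hv
    have hbb : u.2 ≠ v.2 := by
      intro hc; exact hne (Prod.ext hv hc)
    refine ⟨?_, ZMod.val_lt u.1, ?_, hv, hbb⟩
    · simp [lerp, pos, e1, e2]; try ring
    · simp only [lerp_snd, pos]
      rcases hu2 : u.2 with _|_ <;> rcases hv2 : v.2 with _|_ <;>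
        first | (exact absurd (hu2.trans hv2.symm) hbb) | skip
      · -- u false, v true
        have hvv : v.1.val = u.1.val := by rw [← hv]
        rcases hpar : u.1.val % 2 with _ | _
        · have : ynat n u = 1 := by simp [ynat, hu2]
          have h2 : ynat n v = 0 := by simp [ynat, hv2, hvv, hpar]
          rw [this, h2]; left; constructor <;> push_cast <;> nlinarith
        · have : ynat n u = 1 := by simp [ynat, hu2]
          have h2 : ynat n v = 2 := by
            simp [ynat, hv2, hvv]; omega
          rw [this, h2]; right; constructor <;> push_cast <;> nlinarith
      · -- u true, v false
        rcases hpar : u.1.val % 2 with _ | _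
        · have : ynat n u = 0 := by simp [ynat, hu2, hpar]
          have h2 : ynat n v = 1 := by simp [ynat, hv2]
          rw [this, h2]; left; constructor <;> push_cast <;> nlinarith
        · have : ynat n u = 2 := by simp [ynat, hu2]; omega
          have h2 : ynat n v = 1 := by simp [ynat, hv2]
          rw [this, h2]; right; constructor <;> push_cast <;> nlinarith
  · -- non-vertical
    have hxadj := xnat_adj hn hd
    rcases hu2 : u.2 with _|_ <;> rcases hv2 : v.2 with _|_
    · -- horizontal
      right; left
      have hyu : ynat n u = 1 := by simp [ynat, hu2]
      have hyv : ynat n v = 1 := by simp [ynat, hv2]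
      rcases hxadj with hx | hx
      · refine ⟨xnat n v u, ?_, ?_, ?_, Or.inr ⟨?_, ?_⟩⟩
        · simp [lerp, pos, hyu, hyv]; try ring
        · simp [lerp, pos, hx]; push_cast; nlinarith
        · simp [lerp, pos, hx]; push_cast; nlinarith
        · simp [pos, hyv]
        · simp [pos, hyu, hx]; try push_cast; try ring
      · refine ⟨xnat n u v, ?_, ?_, ?_, Or.inl ⟨?_, ?_⟩⟩
        · simp [lerp, pos, hyu, hyv]; try ring
        · simp [lerp, pos, hx]; push_cast; nlinarith
        · simp [lerp, pos, hx]; push_cast; nlinarith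
        · simp [pos, hyu]
        · simp [pos, hyv, hx]; try push_cast; try ring
    · -- u false, v true : v is the shadow
      have hyu : ynat n u = 1 := by simp [ynat, hu2]
      rcases hpar : v.1.val % 2 with _ | _
      · -- lower diagonal, α from v
        right; right; left
        have hyv : ynat n v = 0 := by simp [ynat, hv2, hpar]
        have hpar' : xnat n v u % 2 = 0 := by rw [xnat_parity hn]; omega
        refine ⟨xnat n v u, xnat n u v, hpar', ?_, xnat_le hn v u, xnat_le hn u v,
          ?_, ?_, ?_, Or.inr ⟨?_, ?_⟩⟩
        · omega
        · simp [lerp, pos, hyu, hyv]; nlinarith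
        · simp [lerp, pos, hyu, hyv]; nlinarith
        · simp [lerp, pos, hyu, hyv]; try ring
        · simp [pos, hyv]
        · simp [pos, hyu]
      · -- upper diagonal
        right; right; right
        have hyv : ynat n v = 2 := by simp [ynat, hv2]; omega
        have hpar' : xnat n v u % 2 = 1 := by rw [xnat_parity hn]; omega
        refine ⟨xnat n v u, xnat n u v, hpar', ?_, xnat_le hn v u, xnat_le hn u v,
          ?_, ?_, ?_, Or.inr ⟨?_, ?_⟩⟩
        · omega
        · simp [lerp, pos, hyu, hyv]; nlinarith
        · simp [lerp, pos, hyu, hyv]; nlinarith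
        · simp [lerp, pos, hyu, hyv]; try ring
        · simp [pos, hyv]
        · simp [pos, hyu]
    · -- u true, v false : u is the shadow
      have hyv : ynat n v = 1 := by simp [ynat, hv2]
      rcases hpar : u.1.val % 2 with _ | _
      · right; right; left
        have hyu : ynat n u = 0 := by simp [ynat, hu2, hpar]
        have hpar' : xnat n u v % 2 = 0 := by rw [xnat_parity hn]; omega
        refine ⟨xnat n u v, xnat n v u, hpar', ?_, xnat_le hn u v, xnat_le hn v u,
          ?_, ?_, ?_, Or.inl ⟨?_, ?_⟩⟩
        · omega
        · simp [lerp, pos, hyu, hyv]; nlinarith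
        · simp [lerp, pos, hyu, hyv]; nlinarith
        · simp [lerp, pos, hyu, hyv]; try ring
        · simp [pos, hyu]
        · simp [pos, hyv]
      · right; right; right
        have hyu : ynat n u = 2 := by simp [ynat, hu2]; omega
        have hpar' : xnat n u v % 2 = 1 := by rw [xnat_parity hn]; omega
        refine ⟨xnat n u v, xnat n v u, hpar', ?_, xnat_le hn u v, xnat_le hn v u,
          ?_, ?_, ?_, Or.inl ⟨?_, ?_⟩⟩
        · omega
        · simp [lerp, pos, hyu, hyv]; nlinarith
        · simp [lerp, pos, hyu, hyv]; nlinarith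
        · simp [lerp, pos, hyu, hyv]; try ring
        · simp [pos, hyu]
        · simp [pos, hyv]
    · exact absurd ⟨hu2, hv2⟩ hnb

lemma seg_bounds (hn : 2 ≤ n) (u v : ZMod (2*n) × Bool) {t : ℝ} (ht0 : 0 ≤ t) (ht1 : t ≤ 1) :
    0 ≤ (lerp t (pos n u v) (pos n v u)).1 ∧ (lerp t (pos n u v) (pos n v u)).1 ≤ 2*n ∧
    0 ≤ (lerp t (pos n u v) (pos n v u)).2 ∧ (lerp t (pos n u v) (pos n v u)).2 ≤ 2 := by
  have b1 : ((xnat n u v : ℝ)) ≤ 2*n := by exact_mod_cast (by exact_mod_cast xnat_le hn u v : ((xnat n u v : ℝ)) ≤ ((2*n : ℕ) : ℝ))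
  have b2 : ((xnat n v u : ℝ)) ≤ 2*n := by exact_mod_cast (by exact_mod_cast xnat_le hn v u : ((xnat n v u : ℝ)) ≤ ((2*n : ℕ) : ℝ))
  have b3 : ((ynat n u : ℝ)) ≤ 2 := by exact_mod_cast ynat_le u
  have b4 : ((ynat n v : ℝ)) ≤ 2 := by exact_mod_cast ynat_le v
  have c1 : (0:ℝ) ≤ xnat n u v := Nat.cast_nonneg _
  have c2 : (0:ℝ) ≤ xnat n v u := Nat.cast_nonneg _
  have c3 : (0:ℝ) ≤ ynat n u := Nat.cast_nonneg _
  have c4 : (0:ℝ) ≤ ynat n v := Nat.cast_nonneg _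
  simp only [lerp_fst, lerp_snd, pos]
  refine ⟨by nlinarith, by nlinarith, by nlinarith, by nlinarith⟩

lemma pos_ne (hn : 2 ≤ n) {u v : ZMod (2*n) × Bool}
    (h : (greatShadow (cycleG (2*n))).Adj u v) : pos n u v ≠ pos n v u :=
  fun hc => (adj_elim h).1 (pos_inj hn hc)

lemma xreal_adj (hn : 2 ≤ n) {u v : ZMod (2*n) × Bool}
    (h : (greatShadow (cycleG (2*n))).Adj u v) :
    (pos n u v).1 = (pos n v u).1 ∨ (pos n u v).1 = (pos n v u).1 + 1 ∨
      (pos n v u).1 = (pos n u v).1 + 1 := by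
  obtain ⟨hne, hnb, hcase⟩ := adj_elim h
  rcases hcase with hv | ⟨hne1, hd⟩
  · obtain ⟨e1, e2⟩ := xnat_vert hn hv
    left; simp [pos, e1, e2]
  · rcases xnat_adj hn hd with hx | hx
    · right; left; simp [pos, hx]; try push_cast; try ring
    · right; right; simp [pos, hx]; try push_cast; try ring

lemma lerp_phi_inj (hn : 2 ≤ n) {u v : ZMod (2*n) × Bool}
    (h : (greatShadow (cycleG (2*n))).Adj u v) {t s : ℝ}
    (ht0 : 0 ≤ t) (ht1 : t ≤ 1) (hs0 : 0 ≤ s) (hs1 : s ≤ 1)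
    (heq : Phi n (lerp t (pos n u v) (pos n v u)) = Phi n (lerp s (pos n u v) (pos n v u))) :
    t = s := by
  obtain ⟨p0, pN, p2, _⟩ := seg_bounds hn u v ht0 ht1
  obtain ⟨q0, qN, q2, _⟩ := seg_bounds hn u v hs0 hs1
  rw [phi_eq_iff hn p2 q2 p0 pN q0 qN] at heq
  obtain ⟨hy, hx⟩ := heq
  have hd1 : (lerp t (pos n u v) (pos n v u)).1 - (lerp s (pos n u v) (pos n v u)).1
      = (t - s) * ((pos n v u).1 - (pos n u v).1) := by simp [lerp]; ring
  have hd2 : (lerp t (pos n u v) (pos n v u)).2 - (lerp s (pos n u v) (pos n v u)).2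
      = (t - s) * ((pos n v u).2 - (pos n u v).2) := by simp [lerp]; ring
  have hxb : |(pos n v u).1 - (pos n u v).1| ≤ 1 := by
    rcases xreal_adj hn h with h1 | h1 | h1 <;> rw [abs_le] <;> constructor <;> linarith
  have hN4 : (4:ℝ) ≤ 2*n := by
    have : (2:ℝ) ≤ n := by exact_mod_cast hn
    linarith
  have hxeq : (lerp t (pos n u v) (pos n v u)).1 = (lerp s (pos n u v) (pos n v u)).1 := by
    rcases hx with h1 | ⟨h1, h2⟩ | ⟨h1, h2⟩
    · exact h1
    · exfalso
      rw [abs_le] at hxb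
      nlinarith [hd1]
    · exfalso
      rw [abs_le] at hxb
      nlinarith [hd1]
  by_contra hts
  have hst : t - s ≠ 0 := sub_ne_zero.mpr hts
  have e1 : (pos n v u).1 = (pos n u v).1 := by
    have := hd1; rw [hxeq, sub_self] at this
    have := (mul_eq_zero.mp this.symm).resolve_left hst
    linarith
  have e2 : (pos n v u).2 = (pos n u v).2 := by
    have := hd2; rw [hy, sub_self] at this
    have := (mul_eq_zero.mp this.symm).resolve_left hst
    linarith
  exact pos_ne hn h (Prod.ext e1.symm e2.symm)

lemma interior_no_natpoint (hn : 2 ≤ n) {u v : ZMod (2*n) × Bool}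
    (h : (greatShadow (cycleG (2*n))).Adj u v) {t : ℝ}
    (ht0 : 0 < t) (ht1 : t < 1) {mx my : ℕ}
    (hx : (lerp t (pos n u v) (pos n v u)).1 = (mx : ℝ))
    (hy : (lerp t (pos n u v) (pos n v u)).2 = (my : ℝ)) : False := by
  rcases norm_form hn h ht0 ht1 with ⟨_, _, hyy, _, _⟩ | ⟨m, _, h1, h2, _⟩ |
      ⟨α, β, _, _, _, _, hy1, hy2, _, _⟩ | ⟨α, β, _, _, _, _, hy1, hy2, _, _⟩
  · rcases hyy with ⟨a1, a2⟩ | ⟨a1, a2⟩ <;> rw [hy] at a1 a2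
    · have b1 : 0 < my := by exact_mod_cast a1
      have b2 : my < 1 := by exact_mod_cast a2
      omega
    · have b1 : 1 < my := by exact_mod_cast a1
      have b2 : my < 2 := by exact_mod_cast a2
      omega
  · rw [hx] at h1 h2
    have b1 : m < mx := by exact_mod_cast h1
    have b2 : mx < m + 1 := by exact_mod_cast (by push_cast; linarith : (mx:ℝ) < ((m+1 : ℕ) : ℝ))
    omega
  · rw [hy] at hy1 hy2
    have b1 : 0 < my := by exact_mod_cast hy1
    have b2 : my < 1 := by exact_mod_cast hy2
    omega
  · rw [hy] at hy1 hy2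
    have b1 : 1 < my := by exact_mod_cast hy1
    have b2 : my < 2 := by exact_mod_cast hy2
    omega

lemma vtx_on (hn : 2 ≤ n) {u v w : ZMod (2*n) × Bool}
    (h : (greatShadow (cycleG (2*n))).Adj u v) {t : ℝ}
    (ht0 : 0 ≤ t) (ht1 : t ≤ 1)
    (heq : Phi n (lerp t (pos n u v) (pos n v u)) = Phi n (vpos n w)) :
    w = u ∨ w = v := by
  haveI : NeZero (2*n) := ⟨by omega⟩
  rcases eq_or_lt_of_le ht0 with h0 | h0
  · left
    rw [← h0, lerp_zero, phi_pos_vpos hn u v] at heq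
    exact (vpos_inj hn heq).symm
  rcases eq_or_lt_of_le ht1 with h1 | h1
  · right
    rw [h1, lerp_one, phi_pos_vpos hn v u] at heq
    exact (vpos_inj hn heq).symm
  exfalso
  obtain ⟨p0, pN, p2, _⟩ := seg_bounds hn u v (le_of_lt h0) (le_of_lt h1)
  have hw := ZMod.val_lt w.1
  have w0 : (0:ℝ) ≤ (vpos n w).1 := Nat.cast_nonneg _
  have wN : (vpos n w).1 ≤ 2*n := by
    have : ((w.1.val:ℝ)) ≤ ((2*n:ℕ):ℝ) := by exact_mod_cast le_of_lt hw
    rw [vpos]; push_cast at this ⊢; linarith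
  have w2 : (0:ℝ) ≤ (vpos n w).2 := Nat.cast_nonneg _
  rw [phi_eq_iff hn p2 w2 p0 pN w0 wN] at heq
  obtain ⟨hy, hx⟩ := heq
  have hy' : (lerp t (pos n u v) (pos n v u)).2 = ((ynat n w : ℕ) : ℝ) := hy
  rcases hx with h2 | ⟨h2, _⟩ | ⟨h2, _⟩
  · exact interior_no_natpoint hn h h0 h1 (h2.trans rfl) hy'
  · exact interior_no_natpoint hn h h0 h1 (mx := 0) (by rw [h2]; norm_num) hy'
  · exact interior_no_natpoint hn h h0 h1 (mx := 2*n) (by rw [h2]; push_cast; ring) hy'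

lemma sym2_of_eq {u v a b : ZMod (2*n) × Bool}
    (h : (u = a ∧ v = b) ∨ (u = b ∧ v = a)) : s(u,v) = s(a,b) := by
  rcases h with ⟨h1,h2⟩|⟨h1,h2⟩ <;> subst h1 <;> subst h2
  · rfl
  · exact Sym2.eq_swap

lemma match_sym2 (hn : 2 ≤ n) {u v a b : ZMod (2*n) × Bool} {P0 P1 : ℝ × ℝ}
    (h1 : (pos n u v = P0 ∧ pos n v u = P1) ∨ (pos n v u = P0 ∧ pos n u v = P1))
    (h2 : (pos n a b = P0 ∧ pos n b a = P1) ∨ (pos n b a = P0 ∧ pos n a b = P1)) :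
    s(u,v) = s(a,b) := by
  apply sym2_of_eq
  rcases h1 with ⟨e1,e2⟩|⟨e1,e2⟩ <;> rcases h2 with ⟨f1,f2⟩|⟨f1,f2⟩
  · exact Or.inl ⟨pos_inj hn (e1.trans f1.symm), pos_inj hn (e2.trans f2.symm)⟩
  · exact Or.inr ⟨pos_inj hn (e1.trans f1.symm), pos_inj hn (e2.trans f2.symm)⟩
  · exact Or.inr ⟨pos_inj hn (e2.trans f2.symm), pos_inj hn (e1.trans f1.symm)⟩
  · exact Or.inl ⟨pos_inj hn (e2.trans f2.symm), pos_inj hn (e1.trans f1.symm)⟩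

lemma vert_sym2 {u v a b : ZMod (2*n) × Bool} (hv : u.1 = v.1) (hv' : a.1 = b.1)
    (hb : u.2 ≠ v.2) (hb' : a.2 ≠ b.2) (hi : u.1 = a.1) : s(u,v) = s(a,b) := by
  apply sym2_of_eq
  have hva : v.1 = a.1 := by rw [← hv, hi]
  have hub : u.1 = b.1 := by rw [hi, hv']
  have hvb : v.1 = b.1 := by rw [← hv, hub]
  rcases hu2 : u.2 with _|_ <;> rcases hv2 : v.2 with _|_ <;>
    rcases ha2 : a.2 with _|_ <;> rcases hb2 : b.2 with _|_ <;>
    first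
      | exact absurd (hu2.trans hv2.symm) hb
      | exact absurd (ha2.trans hb2.symm) hb'
      | exact Or.inl ⟨Prod.ext hi (hu2.trans ha2.symm), Prod.ext hvb (hv2.trans hb2.symm)⟩
      | exact Or.inr ⟨Prod.ext hub (hu2.trans hb2.symm), Prod.ext hva (hv2.trans ha2.symm)⟩

lemma nat_sandwich {k C : ℕ} {w x : ℝ} (hk : x = (k:ℝ)) (hcw : x = (C:ℝ) + w)
    (hw0 : 0 < w) (hw1 : w < 1) : False := by
  have h1 : (C:ℝ) < k := by linarith [hk ▸ hcw]
  have h2 : (k:ℝ) < (C:ℝ)+1 := by linarith [hk ▸ hcw]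
  have h1' : C < k := by exact_mod_cast h1
  have h2' : k < C+1 := by exact_mod_cast (by push_cast; linarith : (k:ℝ) < ((C+1:ℕ):ℝ))
  omega

lemma nat_plus_frac {C C' : ℕ} {w w' : ℝ} (hw0 : 0 < w) (hw1 : w < 1)
    (hw0' : 0 < w') (hw1' : w' < 1) (he : (C:ℝ) + w = (C':ℝ) + w') : C = C' := by
  have h1 : (C:ℝ) < C' + 1 := by linarith
  have h2 : (C':ℝ) < C + 1 := by linarith
  have h1' : C < C'+1 := by exact_mod_cast (by push_cast; linarith : (C:ℝ) < ((C'+1:ℕ):ℝ))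
  have h2' : C' < C+1 := by exact_mod_cast (by push_cast; linarith : (C':ℝ) < ((C+1:ℕ):ℝ))
  omega

/-- a lower diagonal is the graph of x = C + w over its y-span -/
lemma dlo_form {A B : ℕ} {x y : ℝ} (h7 : x = (1-y)*A + y*B) (hd : B = A+1 ∨ A = B+1)
    (hy0 : 0 < y) (hy1 : y < 1) :
    ∃ (C : ℕ) (w : ℝ), 0 < w ∧ w < 1 ∧ x = (C:ℝ) + w ∧
      ((C = A ∧ B = A+1) ∨ (C = B ∧ A = B+1)) := by
  rcases hd with e | e
  · refine ⟨A, y, hy0, hy1, ?_, Or.inl ⟨rfl, e⟩⟩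
    rw [h7, (by exact_mod_cast e : (B:ℝ) = (A:ℝ)+1)]; ring
  · refine ⟨B, 1-y, by linarith, by linarith, ?_, Or.inr ⟨rfl, e⟩⟩
    rw [h7, (by exact_mod_cast e : (A:ℝ) = (B:ℝ)+1)]; ring

lemma dhi_form {A B : ℕ} {x y : ℝ} (h7 : x = (y-1)*A + (2-y)*B) (hd : B = A+1 ∨ A = B+1)
    (hy1 : 1 < y) (hy2 : y < 2) :
    ∃ (C : ℕ) (w : ℝ), 0 < w ∧ w < 1 ∧ x = (C:ℝ) + w ∧
      ((C = A ∧ B = A+1) ∨ (C = B ∧ A = B+1)) := by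
  rcases hd with e | e
  · refine ⟨A, 2-y, by linarith, by linarith, ?_, Or.inl ⟨rfl, e⟩⟩
    rw [h7, (by exact_mod_cast e : (B:ℝ) = (A:ℝ)+1)]; ring
  · refine ⟨B, y-1, by linarith, by linarith, ?_, Or.inr ⟨rfl, e⟩⟩
    rw [h7, (by exact_mod_cast e : (A:ℝ) = (B:ℝ)+1)]; ring

/-- no interior point of a segment has x-coordinate 2n -/
lemma interior_x_ne_top (hn : 2 ≤ n) {u v : ZMod (2*n) × Bool}
    (h : (greatShadow (cycleG (2*n))).Adj u v) {t : ℝ}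
    (ht0 : 0 < t) (ht1 : t < 1)
    (hc : (lerp t (pos n u v) (pos n v u)).1 = 2*(n:ℝ)) : False := by
  have hc' : (lerp t (pos n u v) (pos n v u)).1 = ((2*n : ℕ):ℝ) := by rw [hc]; push_cast; ring
  rcases norm_form hn h ht0 ht1 with ⟨pv1, pvlt, _, _, _⟩ | ⟨m1, _, ph2, ph3, _⟩ |
      ⟨a1, b1, _, pd2, _, _, pd5, pd6, pd7, _⟩ | ⟨a1, b1, _, pu2, _, _, pu5, pu6, pu7, _⟩
  · rw [pv1] at hc'
    have : u.1.val = 2*n := by exact_mod_cast hc'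
    omega
  · rw [hc'] at ph2 ph3
    have e1 : m1 < 2*n := by exact_mod_cast ph2
    have e2 : 2*n < m1+1 := by exact_mod_cast (by push_cast at ph3 ⊢; linarith : ((2*n:ℕ):ℝ) < ((m1+1:ℕ):ℝ))
    omega
  · obtain ⟨C, w, hw0, hw1, hxw, _⟩ := dlo_form pd7 pd2 pd5 pd6
    exact nat_sandwich hc' hxw hw0 hw1
  · obtain ⟨C, w, hw0, hw1, hxw, _⟩ := dhi_form pu7 pu2 pu5 pu6
    exact nat_sandwich hc' hxw hw0 hw1

lemma key (hn : 2 ≤ n) {u v a b : ZMod (2*n) × Bool}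
    (h : (greatShadow (cycleG (2*n))).Adj u v) (h' : (greatShadow (cycleG (2*n))).Adj a b)
    {t s : ℝ} (ht0 : 0 ≤ t) (ht1 : t ≤ 1) (hs0 : 0 ≤ s) (hs1 : s ≤ 1)
    (heq : Phi n (lerp t (pos n u v) (pos n v u)) = Phi n (lerp s (pos n a b) (pos n b a))) :
    s(u,v) = s(a,b) ∨ ∃ w, (w = u ∨ w = v) ∧ (w = a ∨ w = b) ∧
      Phi n (lerp t (pos n u v) (pos n v u)) = Phi n (vpos n w) := by
  haveI : NeZero (2*n) := ⟨by omega⟩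
  by_cases et : t = 0 ∨ t = 1
  · obtain ⟨w1, hw1, hpw⟩ : ∃ w1, (w1 = u ∨ w1 = v) ∧
        Phi n (lerp t (pos n u v) (pos n v u)) = Phi n (vpos n w1) := by
      rcases et with e | e
      · exact ⟨u, Or.inl rfl, by rw [e, lerp_zero]; exact phi_pos_vpos hn u v⟩
      · exact ⟨v, Or.inr rfl, by rw [e, lerp_one]; exact phi_pos_vpos hn v u⟩
    have h2 : w1 = a ∨ w1 = b := vtx_on hn h' hs0 hs1 (heq.symm.trans hpw)
    exact Or.inr ⟨w1, hw1, h2, hpw⟩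
  by_cases es : s = 0 ∨ s = 1
  · obtain ⟨w2, hw2, hqw⟩ : ∃ w2, (w2 = a ∨ w2 = b) ∧
        Phi n (lerp s (pos n a b) (pos n b a)) = Phi n (vpos n w2) := by
      rcases es with e | e
      · exact ⟨a, Or.inl rfl, by rw [e, lerp_zero]; exact phi_pos_vpos hn a b⟩
      · exact ⟨b, Or.inr rfl, by rw [e, lerp_one]; exact phi_pos_vpos hn b a⟩
    have h2 : w2 = u ∨ w2 = v := vtx_on hn h ht0 ht1 (heq.trans hqw)
    exact Or.inr ⟨w2, h2, hw2, heq.trans hqw⟩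
  push_neg at et es
  have ht0' : 0 < t := lt_of_le_of_ne ht0 (Ne.symm et.1)
  have ht1' : t < 1 := lt_of_le_of_ne ht1 et.2
  have hs0' : 0 < s := lt_of_le_of_ne hs0 (Ne.symm es.1)
  have hs1' : s < 1 := lt_of_le_of_ne hs1 es.2
  obtain ⟨p0, pN, p2, _⟩ := seg_bounds hn u v ht0 ht1
  obtain ⟨q0, qN, q2, _⟩ := seg_bounds hn a b hs0 hs1
  rw [phi_eq_iff hn p2 q2 p0 pN q0 qN] at heq
  obtain ⟨hy, hx⟩ := heq
  have hxx : (lerp t (pos n u v) (pos n v u)).1 = (lerp s (pos n a b) (pos n b a)).1 := by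
    rcases hx with h1 | ⟨h1, h2⟩ | ⟨h1, h2⟩
    · exact h1
    · exact absurd h2 (fun hc => interior_x_ne_top hn h' hs0' hs1' hc)
    · exact absurd h1 (fun hc => interior_x_ne_top hn h ht0' ht1' hc)
  clear hx p0 pN p2 q0 qN
  rcases norm_form hn h ht0' ht1' with ⟨pv1, pvlt, pvy, pvv, pvb⟩ | ⟨m1, ph1, ph2, ph3, phor⟩ |
      ⟨a1, b1, pd1, pd2, _, _, pd5, pd6, pd7, pdor⟩ | ⟨a1, b1, pu1, pu2, _, _, pu5, pu6, pu7, puor⟩ <;>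
    rcases norm_form hn h' hs0' hs1' with ⟨qv1, qvlt, qvy, qvv, qvb⟩ | ⟨m2, qh1, qh2, qh3, qhor⟩ |
      ⟨a2, b2, qd1, qd2, _, _, qd5, qd6, qd7, qdor⟩ | ⟨a2, b2, qu1, qu2, _, _, qu5, qu6, qu7, quor⟩
  · -- V V
    left
    have : u.1.val = a.1.val := by
      have := pv1.symm.trans (hxx.trans qv1)
      exact_mod_cast this
    exact vert_sym2 pvv qvv pvb qvb (ZMod.val_injective _ this)
  · -- V H
    exfalso; rcases pvy with ⟨e1,e2⟩|⟨e1,e2⟩ <;> rw [hy, qh1] at e1 e2 <;> linarith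
  · -- V Dlo
    exfalso
    obtain ⟨C, w, hw0, hw1, hxw, _⟩ := dlo_form qd7 qd2 qd5 qd6
    exact nat_sandwich (hxx.symm.trans pv1) hxw hw0 hw1
  · -- V Dhi
    exfalso
    obtain ⟨C, w, hw0, hw1, hxw, _⟩ := dhi_form qu7 qu2 qu5 qu6
    exact nat_sandwich (hxx.symm.trans pv1) hxw hw0 hw1
  · -- H V
    exfalso; rcases qvy with ⟨e1,e2⟩|⟨e1,e2⟩ <;> rw [← hy, ph1] at e1 e2 <;> linarith
  · -- H H
    left
    rw [hxx] at ph2 ph3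
    have e1 : m1 < m2+1 := by
      exact_mod_cast (by push_cast; linarith : (m1:ℝ) < ((m2+1:ℕ):ℝ))
    have e2 : m2 < m1+1 := by
      exact_mod_cast (by push_cast; linarith : (m2:ℝ) < ((m1+1:ℕ):ℝ))
    have : m2 = m1 := by omega
    rw [this] at qhor
    exact match_sym2 hn phor qhor
  · -- H Dlo
    exfalso; rw [hy] at ph1; linarith
  · -- H Dhi
    exfalso; rw [hy] at ph1; linarith
  · -- Dlo V
    exfalso
    obtain ⟨C, w, hw0, hw1, hxw, _⟩ := dlo_form pd7 pd2 pd5 pd6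
    exact nat_sandwich (hxx.trans qv1) hxw hw0 hw1
  · -- Dlo H
    exfalso; rw [← hy] at qh1; linarith
  · -- Dlo Dlo
    left
    obtain ⟨C, w, hw0, hw1, hxw, hCtag⟩ := dlo_form pd7 pd2 pd5 pd6
    obtain ⟨C', w', hw0', hw1', hxw', hCtag'⟩ := dlo_form qd7 qd2 qd5 qd6
    have hCC : C = C' := nat_plus_frac hw0 hw1 hw0' hw1' (by rw [← hxw, hxx, hxw'])
    rcases hCtag with ⟨hC, hdir⟩ | ⟨hC, hdir⟩ <;> rcases hCtag' with ⟨hC', hdir'⟩ | ⟨hC', hdir'⟩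
    · have ea : a1 = a2 := by omega
      have eb : b1 = b2 := by omega
      rw [← ea, ← eb] at qdor
      exact match_sym2 hn pdor qdor
    · exfalso; omega
    · exfalso; omega
    · have eb : b1 = b2 := by omega
      have ea : a1 = a2 := by omega
      rw [← ea, ← eb] at qdor
      exact match_sym2 hn pdor qdor
  · -- Dlo Dhi
    exfalso; rw [hy] at pd6; linarith
  · -- Dhi V
    exfalso
    obtain ⟨C, w, hw0, hw1, hxw, _⟩ := dhi_form pu7 pu2 pu5 pu6
    exact nat_sandwich (hxx.trans qv1) hxw hw0 hw1
  · -- Dhi H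
    exfalso; rw [← hy] at qh1; linarith
  · -- Dhi Dlo
    exfalso; rw [hy] at pu5; linarith
  · -- Dhi Dhi
    left
    obtain ⟨C, w, hw0, hw1, hxw, hCtag⟩ := dhi_form pu7 pu2 pu5 pu6
    obtain ⟨C', w', hw0', hw1', hxw', hCtag'⟩ := dhi_form qu7 qu2 qu5 qu6
    have hCC : C = C' := nat_plus_frac hw0 hw1 hw0' hw1' (by rw [← hxw, hxx, hxw'])
    rcases hCtag with ⟨hC, hdir⟩ | ⟨hC, hdir⟩ <;> rcases hCtag' with ⟨hC', hdir'⟩ | ⟨hC', hdir'⟩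
    · have ea : a1 = a2 := by omega
      have eb : b1 = b2 := by omega
      rw [← ea, ← eb] at quor
      exact match_sym2 hn puor quor
    · exfalso; omega
    · exfalso; omega
    · have eb : b1 = b2 := by omega
      have ea : a1 = a2 := by omega
      rw [← ea, ← eb] at quor
      exact match_sym2 hn puor quor

noncomputable def Psi (n : ℕ) (p : ℝ × ℝ) : ℝ × ℝ := Complex.equivRealProdCLM (Phi n p)

lemma psi_eq_iff {n : ℕ} {p q : ℝ × ℝ} : Psi n p = Psi n q ↔ Phi n p = Phi n q :=
  ⟨fun h => Complex.equivRealProdCLM.injective h, fun h => by rw [Psi, Psi, h]⟩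

lemma psi_cont (n : ℕ) : Continuous (Psi n) :=
  Complex.equivRealProdCLM.continuous.comp (phi_cont n)

noncomputable def segPath (p q : ℝ × ℝ) : Path p q where
  toFun t := lerp (t : ℝ) p q
  continuous_toFun := by
    have hc : Continuous fun t : ℝ => lerp t p q := by
      unfold lerp; fun_prop
    exact hc.comp continuous_subtype_val
  source' := by simp [lerp]
  target' := by simp [lerp]

lemma segPath_apply (p q : ℝ × ℝ) (t : unitInterval) : segPath p q t = lerp (t:ℝ) p q := rfl

noncomputable def arc (n : ℕ) (hn : 2 ≤ n) {u v : ZMod (2*n) × Bool}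
    (h : (greatShadow (cycleG (2*n))).Adj u v) :
    Path (Psi n (vpos n u)) (Psi n (vpos n v)) :=
  ((segPath (pos n u v) (pos n v u)).map (psi_cont n)).cast
    (psi_eq_iff.mpr (phi_pos_vpos hn u v).symm)
    (psi_eq_iff.mpr (phi_pos_vpos hn v u).symm)

lemma arc_apply (n : ℕ) (hn : 2 ≤ n) {u v : ZMod (2*n) × Bool}
    (h : (greatShadow (cycleG (2*n))).Adj u v) (t : unitInterval) :
    arc n hn h t = Psi n (lerp (t:ℝ) (pos n u v) (pos n v u)) := rfl

end GSP

/-- For every even cycle `C` (of length `2n`, `n ≥ 2`), `S(C)` is planar. -/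
theorem greatShadow_evenCycle_planar (n : ℕ) (hn : 2 ≤ n) :
    IsPlanar (greatShadow (cycleG (2 * n))) := by
  haveI : NeZero (2*n) := ⟨by omega⟩
  refine ⟨?_⟩
  refine
    { vtx := fun u => GSP.Psi n (GSP.vpos n u)
      vtx_inj := fun u w h => GSP.vpos_inj hn (GSP.psi_eq_iff.mp h)
      arc := fun u v h => GSP.arc n hn h
      arc_inj := ?_
      arc_symm := ?_
      arc_vtx := ?_
      arc_meet := ?_ }
  · -- arc_inj
    intro u v h t s hts
    rw [GSP.arc_apply, GSP.arc_apply] at hts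
    exact Subtype.ext (GSP.lerp_phi_inj hn h t.2.1 t.2.2 s.2.1 s.2.2 (GSP.psi_eq_iff.mp hts))
  · -- arc_symm
    intro u v h
    apply Path.ext; funext t
    show GSP.Psi n (GSP.lerp (↑t) (GSP.pos n v u) (GSP.pos n u v)) = _
    rw [GSP.lerp_comm]
    have : (GSP.arc n hn h).symm t = GSP.arc n hn h (unitInterval.symm t) := rfl
    rw [this, GSP.arc_apply]
    try congr 2
    try simp [unitInterval.symm]
  · -- arc_vtx
    intro u v h w hw
    obtain ⟨t, ht⟩ := hw
    rw [GSP.arc_apply] at ht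
    exact GSP.vtx_on hn h t.2.1 t.2.2 (GSP.psi_eq_iff.mp ht)
  · -- arc_meet
    intro u v a b h h' hne z hz
    obtain ⟨⟨t, ht⟩, ⟨s, hs⟩⟩ := hz
    rw [GSP.arc_apply] at ht hs
    have hphi : GSP.Phi n (GSP.lerp (↑t) (GSP.pos n u v) (GSP.pos n v u)) =
        GSP.Phi n (GSP.lerp (↑s) (GSP.pos n a b) (GSP.pos n b a)) :=
      GSP.psi_eq_iff.mp (ht.trans hs.symm)
    rcases GSP.key hn h h' t.2.1 t.2.2 s.2.1 s.2.2 hphi with hc | ⟨w, hwu, hwa, hval⟩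
    · exact absurd hc hne
    · have hz1 : z = GSP.Psi n (GSP.vpos n w) := by
        rw [← ht, GSP.psi_eq_iff]; exact hval
      constructor
      · rcases hwu with e | e <;> subst e <;> rw [hz1]
        · exact Set.mem_insert _ _
        · exact Set.mem_insert_of_mem _ rfl
      · rcases hwa with e | e <;> subst e <;> rw [hz1]
        · exact Set.mem_insert _ _
        · exact Set.mem_insert_of_mem _ rfl

end
end
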